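/- Cover–Hart lemma: let Ω be a separable metric space, μ a Borel probability measure on Ω, and (X_n) an i.i.d. sequence with law μ. Fix k_n with k_n/n → 0. For x ∈ Ω let r_n(x) be the smallest r ≥ 0 such that the closed ball of radius r around x contains at least k_n of the points X₁,…,X_n. Then almost surely, r_n converges to 0 uniformly on every totally bounded subset of the support of μ. -/

import Mathlib

/-!
Each `kNNRadius X k n ω` is `1`-Lipschitz. For a point `x` of the support and `ε > 0`, the strong
law of large numbers makes the number of sample points in `closedBall x ε` grow like
`n μ(closedBall x ε)`, which eventually exceeds `k n = o(n)`. Hence almost surely the radii tend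
to `0` at every point of a countable dense subset of the support, and an equicontinuous family
converging pointwise on a dense set converges uniformly on totally bounded sets.
-/

open MeasureTheory Metric Filter
open scoped ENNReal

/-- The `k`-NN radius of `x` within the sample `X₀(ω), …, X_{n-1}(ω)`: the smallest
`r ≥ 0` such that the closed ball of radius `r` around `x` contains at least `k`
of the sample points. -/
noncomputable def kNNRadius {Ω α : Type*} [MetricSpace Ω] (X : ℕ → α → Ω)
    (k : ℕ → ℕ) (n : ℕ) (ω : α) (x : Ω) : ℝ :=
  sInf {r : ℝ | 0 ≤ r ∧
    k n ≤ ((Finset.range n).filter fun i => dist (X i ω) x ≤ r).card}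

theorem UniformEquicontinuous.tendstoUniformlyOn_const {ι α β : Type*} [PseudoMetricSpace α]
    [PseudoMetricSpace β] {l : Filter ι} {F : ι → α → β} (hF : UniformEquicontinuous F)
    {c : β} {D K : Set α} (hD : ∀ a ∈ D, Tendsto (F · a) l (nhds c))
    (hK : TotallyBounded K) (hKD : K ⊆ closure D) :
    TendstoUniformlyOn F (fun _ => c) l K := by
  rw [Metric.tendstoUniformlyOn_iff]
  intro ε hε
  obtain ⟨δ, hδ, hFδ⟩ := Metric.uniformEquicontinuous_iff.1 hF (ε / 2) (half_pos hε)
  obtain ⟨t, htK, htfin, hKt⟩ := finite_approx_of_totallyBounded hK (δ / 2) (half_pos hδ)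
  have hnear : ∀ y ∈ t, ∃ a ∈ D, dist y a < δ / 2 := fun y hy =>
    Metric.mem_closure_iff.1 (hKD (htK hy)) _ (half_pos hδ)
  choose! a haD hya using hnear
  have hev : ∀ᶠ i in l, ∀ y ∈ t, dist (F i (a y)) c < ε / 2 :=
    (eventually_all_finite htfin).2 fun y hy =>
      Metric.tendsto_nhds.1 (hD _ (haD y hy)) _ (half_pos hε)
  filter_upwards [hev] with i hi z hz
  obtain ⟨y, hy, hzy⟩ := Set.mem_iUnion₂.1 (hKt hz)
  have hza : dist z (a y) < δ := by
    linarith [dist_triangle z y (a y), mem_ball.1 hzy, hya y hy]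
  linarith [dist_triangle (F i z) (F i (a y)) c, dist_comm c (F i z), hi y hy, hFδ z (a y) hza i]

section kNNRadius

variable {Ω α : Type*} [MetricSpace Ω] (X : ℕ → α → Ω) (k : ℕ → ℕ) (n : ℕ) (ω : α)

theorem kNNRadius_nonneg (x : Ω) : 0 ≤ kNNRadius X k n ω x :=
  Real.sInf_nonneg fun _ hr => hr.1

variable {X k n ω} in
theorem kNNRadius_le_of_le_card {x : Ω} {r : ℝ} (hr : 0 ≤ r)
    (h : k n ≤ ((Finset.range n).filter fun i => dist (X i ω) x ≤ r).card) :
    kNNRadius X k n ω x ≤ r :=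
  csInf_le ⟨0, fun _ hr => hr.1⟩ ⟨hr, h⟩

theorem kNNRadius_le_add_dist (x y : Ω) :
    kNNRadius X k n ω x ≤ kNNRadius X k n ω y + dist x y := by
  set R : Ω → Set ℝ := fun x => {r : ℝ | 0 ≤ r ∧
    k n ≤ ((Finset.range n).filter fun i => dist (X i ω) x ≤ r).card}
  have hR : ∀ x, kNNRadius X k n ω x = sInf (R x) := fun _ => rfl
  have shift : ∀ x y, ∀ r ∈ R x, r + dist x y ∈ R y := by
    rintro x y r ⟨hr0, hrk⟩
    refine ⟨by positivity, hrk.trans (Finset.card_le_card fun i hi => ?_)⟩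
    simp only [Finset.mem_filter] at hi ⊢
    exact ⟨hi.1, (dist_triangle _ x y).trans (by linarith [hi.2])⟩
  -- If no radius is admissible at `y`, none is at `x`, and both sides use the junk `sInf ∅ = 0`.
  rcases (R y).eq_empty_or_nonempty with hy | hy
  · have hx : R x = ∅ := Set.eq_empty_of_forall_notMem fun r hr =>
      (Set.eq_empty_iff_forall_notMem.1 hy) _ (shift x y r hr)
    rw [hR, hR, hx, hy, Real.sInf_empty, zero_add]
    exact dist_nonneg
  · rw [← sub_le_iff_le_add]
    refine le_csInf hy fun r hr => sub_le_iff_le_add.2 ?_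
    rw [dist_comm]
    exact csInf_le ⟨0, fun _ h => h.1⟩ (shift y x r hr)

theorem lipschitzWith_kNNRadius : LipschitzWith 1 (kNNRadius X k n ω) :=
  LipschitzWith.of_le_add (kNNRadius_le_add_dist X k n ω)

end kNNRadius

section Sample

open ProbabilityTheory

variable {Ω α : Type*} [MeasurableSpace Ω] [MeasurableSpace α] {P : Measure α} {μ : Measure Ω}
  {X : ℕ → α → Ω}

open scoped Classical in
theorem ae_tendsto_card_filter_mem_div (hmeas : ∀ i, Measurable (X i))
    (hlaw : ∀ i, P.map (X i) = μ) (hindep : Pairwise fun i j => IndepFun (X i) (X j) P)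
    {s : Set Ω} (hs : MeasurableSet s) (hμs : μ s ≠ ∞) :
    ∀ᵐ ω ∂P, Tendsto (fun n : ℕ => (((Finset.range n).filter fun i => X i ω ∈ s).card : ℝ) / n)
      atTop (nhds (μ.real s)) := by
  set g : Ω → ℝ := s.indicator 1
  have hg : Measurable g := measurable_one.indicator hs
  have hint : Integrable (g ∘ X 0) P := by
    rw [← integrable_map_measure (by rw [hlaw]; exact hg.aestronglyMeasurable)
      (hmeas 0).aemeasurable, hlaw]
    exact (integrable_indicator_iff hs).2 (integrableOn_const hμs)
  have hident : ∀ i, IdentDistrib (g ∘ X i) (g ∘ X 0) P P := fun i =>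
    IdentDistrib.comp ⟨(hmeas i).aemeasurable, (hmeas 0).aemeasurable, by rw [hlaw, hlaw]⟩ hg
  have hmean : ∫ ω, g (X 0 ω) ∂P = μ.real s := by
    rw [← integral_map (hmeas 0).aemeasurable (by
      rw [hlaw]; exact hg.aestronglyMeasurable), hlaw, integral_indicator_one hs]
  have hslln := strong_law_ae_real (fun i => g ∘ X i) hint
    (fun i j hij => (hindep hij).comp hg hg) hident
  filter_upwards [hslln] with ω hω
  convert hω using 2 with n
  · simp only [Finset.natCast_card_filter, g, Function.comp_apply, Set.indicator_apply,
      Pi.one_apply]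
  · exact hmean.symm

variable [MetricSpace Ω] [BorelSpace Ω] [IsFiniteMeasure μ] {k : ℕ → ℕ}

theorem ae_eventually_kNNRadius_le (hmeas : ∀ i, Measurable (X i))
    (hlaw : ∀ i, P.map (X i) = μ) (hindep : Pairwise fun i j => IndepFun (X i) (X j) P)
    (hk : Tendsto (fun n => (k n : ℝ) / n) atTop (nhds 0)) {x : Ω} {ε : ℝ} (hε : 0 ≤ ε)
    (hx : 0 < μ (closedBall x ε)) :
    ∀ᵐ ω ∂P, ∀ᶠ n in atTop, kNNRadius X k n ω x ≤ ε := by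
  have hpos : 0 < μ.real (closedBall x ε) := ENNReal.toReal_pos hx.ne' (measure_ne_top μ _)
  filter_upwards [ae_tendsto_card_filter_mem_div hmeas hlaw hindep measurableSet_closedBall
    (measure_ne_top μ _)] with ω hω
  filter_upwards [hk.eventually_lt hω hpos, eventually_gt_atTop 0] with n hlt hn
  have hcard := (div_lt_div_iff_of_pos_right (Nat.cast_pos.2 hn)).1 hlt
  refine kNNRadius_le_of_le_card hε ((Nat.cast_lt.1 hcard).le.trans
    (Finset.card_le_card fun i hi => ?_))
  simpa only [Finset.mem_filter, mem_closedBall] using hi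

theorem ae_tendsto_kNNRadius_zero (hmeas : ∀ i, Measurable (X i))
    (hlaw : ∀ i, P.map (X i) = μ) (hindep : Pairwise fun i j => IndepFun (X i) (X j) P)
    (hk : Tendsto (fun n => (k n : ℝ) / n) atTop (nhds 0)) {x : Ω}
    (hx : ∀ ε : ℝ, 0 < ε → 0 < μ (ball x ε)) :
    ∀ᵐ ω ∂P, Tendsto (fun n => kNNRadius X k n ω x) atTop (nhds 0) := by
  have h : ∀ m : ℕ, ∀ᵐ ω ∂P, ∀ᶠ n in atTop, kNNRadius X k n ω x ≤ 1 / (m + 1) := fun m =>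
    ae_eventually_kNNRadius_le hmeas hlaw hindep hk (by positivity)
      ((hx _ Nat.one_div_pos_of_nat).trans_le (measure_mono ball_subset_closedBall))
  filter_upwards [ae_all_iff.2 h] with ω hω
  refine tendsto_order.2 ⟨fun a ha => Eventually.of_forall fun n =>
    ha.trans_le (kNNRadius_nonneg X k n ω x), fun a ha => ?_⟩
  obtain ⟨m, hm⟩ := exists_nat_one_div_lt ha
  exact (hω m).mono fun n hn => hn.trans_lt hm

end Sample

theorem cover_hart_general {Ω α : Type*} [MetricSpace Ω] [TopologicalSpace.SeparableSpace Ω]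
    [MeasurableSpace Ω] [BorelSpace Ω] [MeasurableSpace α]
    (P : Measure α) (μ : Measure Ω) [IsProbabilityMeasure μ]
    (X : ℕ → α → Ω) (hmeas : ∀ i, Measurable (X i))
    (hlaw : ∀ i, P.map (X i) = μ)
    (hindep : ProbabilityTheory.iIndepFun X P)
    (k : ℕ → ℕ) (hk : Tendsto (fun n => (k n : ℝ) / n) atTop (nhds 0)) :
    ∀ᵐ ω ∂P, ∀ K : Set Ω, TotallyBounded K →
      K ⊆ {x : Ω | ∀ ε : ℝ, 0 < ε → 0 < μ (ball x ε)} →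
      TendstoUniformlyOn (fun n x => kNNRadius X k n ω x) (fun _ => (0 : ℝ)) atTop K := by
  obtain ⟨D, hDS, hDc, hSD⟩ := (TopologicalSpace.IsSeparable.of_separableSpace
    {x : Ω | ∀ ε : ℝ, 0 < ε → 0 < μ (ball x ε)}).exists_countable_dense_subset
  have hD : ∀ᵐ ω ∂P, ∀ a ∈ D, Tendsto (fun n => kNNRadius X k n ω a) atTop (nhds 0) :=
    (ae_ball_iff hDc).2 fun a ha =>
      ae_tendsto_kNNRadius_zero hmeas hlaw (fun i j hij => hindep.indepFun hij) hk (hDS ha)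
  filter_upwards [hD] with ω hω K hK hKS
  exact (LipschitzWith.uniformEquicontinuous _ 1 (lipschitzWith_kNNRadius X k · ω)
    ).tendstoUniformlyOn_const hω hK (hKS.trans hSD)

/-- Cover–Hart lemma: if `(Xₙ)` is an i.i.d. sequence with law `μ` on a separable
metric space, and `kₙ/n → 0`, then almost surely the `kₙ`-NN radii converge to `0`
uniformly on every totally bounded subset of the support of `μ`. -/
theorem cover_hart {Ω α : Type*} [MetricSpace Ω] [TopologicalSpace.SeparableSpace Ω]
    [MeasurableSpace Ω] [BorelSpace Ω] [MeasurableSpace α]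
    (P : Measure α) [IsProbabilityMeasure P] (μ : Measure Ω) [IsProbabilityMeasure μ]
    (X : ℕ → α → Ω) (hmeas : ∀ i, Measurable (X i))
    (hlaw : ∀ i, P.map (X i) = μ)
    (hindep : ProbabilityTheory.iIndepFun X P)
    (k : ℕ → ℕ) (hk : Tendsto (fun n => (k n : ℝ) / n) atTop (nhds 0)) :
    ∀ᵐ ω ∂P, ∀ K : Set Ω, TotallyBounded K →
      K ⊆ {x : Ω | ∀ ε : ℝ, 0 < ε → 0 < μ (ball x ε)} →
      TendstoUniformlyOn (fun n x => kNNRadius X k n ω x) (fun _ => (0 : ℝ)) atTop K :=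
  cover_hart_general P μ X hmeas hlaw hindep k hk
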